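/- arXiv:2509.18371 — 2 statements merged into one kernel-verified Lean document; each statement's English description precedes it below -/
import Mathlib

section
/- Let M ⪰ 0 and R ≻ 0 be symmetric, and let P ⪰ 0 be a symmetric solution of the DARE P = M + AᵀPA − AᵀPB(R + BᵀPB)⁻¹BᵀPA. Let x : ℕ → ℝⁿ and u : ℕ → ℝᵐ be any trajectory satisfying x(k+1) = A x(k) + B u(k). Then for every N, the partial cost satisfies Σ_{k=0}^{N−1} ( x(k)ᵀM x(k) + u(k)ᵀR u(k) ) ≥ x(0)ᵀP x(0) − x(N)ᵀP x(N); consequently, if x(N) → 0 as N → ∞, then every partial sum, and hence the (possibly infinite) total infinite-horizon cost, is at least x(0)ᵀP x(0). -/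
open Matrix Finset Filter

private lemma dare_dot_trans {n m : ℕ} (C : Matrix (Fin m) (Fin n) ℝ) (a : Fin n → ℝ) (b : Fin m → ℝ) :
    a ⬝ᵥ (Cᵀ *ᵥ b) = (C *ᵥ a) ⬝ᵥ b := by
  simp only [dotProduct, mulVec, transpose_apply, Finset.mul_sum, Finset.sum_mul]
  rw [Finset.sum_comm]
  refine Finset.sum_congr rfl fun i _ => Finset.sum_congr rfl fun j _ => by ring

private lemma dare_dot_quad {p q r : ℕ} (C : Matrix (Fin p) (Fin q) ℝ) (D : Matrix (Fin p) (Fin r) ℝ)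
    (a : Fin q → ℝ) (b : Fin r → ℝ) :
    (C *ᵥ a) ⬝ᵥ (D *ᵥ b) = a ⬝ᵥ ((Cᵀ * D) *ᵥ b) := by
  rw [← mulVec_mulVec, dare_dot_trans]

private lemma dare_stage {n m : ℕ}
    (A : Matrix (Fin n) (Fin n) ℝ) (B : Matrix (Fin n) (Fin m) ℝ)
    (P M : Matrix (Fin n) (Fin n) ℝ) (R : Matrix (Fin m) (Fin m) ℝ)
    (hR : R.PosDef) (hP : P.PosSemidef)
    (hDARE : P = M + Aᵀ * P * A - Aᵀ * P * B * (R + Bᵀ * P * B)⁻¹ * (Bᵀ * P * A))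
    (a : Fin n → ℝ) (b : Fin m → ℝ) :
    a ⬝ᵥ (P *ᵥ a) - (A *ᵥ a + B *ᵥ b) ⬝ᵥ (P *ᵥ (A *ᵥ a + B *ᵥ b))
      ≤ a ⬝ᵥ (M *ᵥ a) + b ⬝ᵥ (R *ᵥ b) := by
  set S := R + Bᵀ * P * B with hSdef
  have hPt : Pᵀ = P := hP.1
  have hBPB : (Bᵀ * P * B).PosSemidef := by
    have h := hP.conjTranspose_mul_mul_same B
    simpa using h
  have hS : S.PosDef := hR.add_posSemidef hBPB
  have hSt : Sᵀ = S := hS.1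
  have hdet : IsUnit S.det := isUnit_iff_ne_zero.mpr hS.det_pos.ne'
  have hSinv : S * S⁻¹ = 1 := mul_nonsing_inv S hdet
  have hSinv' : S⁻¹ * S = 1 := nonsing_inv_mul S hdet
  have hSit : S⁻¹ᵀ = S⁻¹ := by rw [transpose_nonsing_inv, hSt]
  set K := S⁻¹ * (Bᵀ * P * A) with hK
  have hsq : 0 ≤ (b + K *ᵥ a) ⬝ᵥ (S *ᵥ (b + K *ᵥ a)) := hS.posSemidef.dotProduct_mulVec_nonneg _
  have hSK : S * K = Bᵀ * P * A := by
    rw [hK, ← Matrix.mul_assoc, hSinv, Matrix.one_mul]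
  have hTr : (Bᵀ * P * A)ᵀ = Aᵀ * P * B := by
    rw [transpose_mul, transpose_mul, transpose_transpose, hPt, Matrix.mul_assoc]
  have hKt : Kᵀ = Aᵀ * P * B * S⁻¹ := by
    rw [hK, transpose_mul, hSit, hTr]
  have hKtS : Kᵀ * S = Aᵀ * P * B := by
    rw [hKt, Matrix.mul_assoc, hSinv', Matrix.mul_one]
  have hKtSK : Kᵀ * (S * K) = Aᵀ * P * B * S⁻¹ * (Bᵀ * P * A) := by
    rw [hSK, hKt]
  have hPa : P *ᵥ a = M *ᵥ a + (Aᵀ * P * A) *ᵥ a - (Aᵀ * P * B * S⁻¹ * (Bᵀ * P * A)) *ᵥ a := by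
    conv_lhs => rw [hDARE]
    simp [Matrix.sub_mulVec, Matrix.add_mulVec]
  have key : (b + K *ᵥ a) ⬝ᵥ (S *ᵥ (b + K *ᵥ a))
      = a ⬝ᵥ (M *ᵥ a) + b ⬝ᵥ (R *ᵥ b)
        - (a ⬝ᵥ (P *ᵥ a) - (A *ᵥ a + B *ᵥ b) ⬝ᵥ (P *ᵥ (A *ᵥ a + B *ᵥ b))) := by
    conv_lhs =>
      simp only [mulVec_add, dotProduct_add, add_dotProduct, mulVec_mulVec]
      simp only [dare_dot_quad]
      simp only [mulVec_mulVec]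
    conv_rhs =>
      simp only [mulVec_add, dotProduct_add, add_dotProduct, mulVec_mulVec]
      simp only [dare_dot_quad]
      simp only [mulVec_mulVec]
      rw [hPa]
      simp only [dotProduct_add, dotProduct_sub]
    rw [hKtS, hKtSK, hSK]
    simp only [← Matrix.mul_assoc]
    rw [hSdef]
    simp only [Matrix.add_mulVec, dotProduct_add]
    ring
  linarith

theorem dare_infinite_horizon_lower_bound
    {n m : ℕ}
    (A : Matrix (Fin n) (Fin n) ℝ) (B : Matrix (Fin n) (Fin m) ℝ)
    (P M : Matrix (Fin n) (Fin n) ℝ) (R : Matrix (Fin m) (Fin m) ℝ)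
    (hM : M.PosSemidef) (hR : R.PosDef) (hP : P.PosSemidef)
    (hDARE : P = M + Aᵀ * P * A - Aᵀ * P * B * (R + Bᵀ * P * B)⁻¹ * (Bᵀ * P * A))
    (x : ℕ → Fin n → ℝ) (u : ℕ → Fin m → ℝ)
    (hdyn : ∀ k, x (k + 1) = A *ᵥ x k + B *ᵥ u k) :
    (∀ N, ∑ k ∈ Finset.range N, (x k ⬝ᵥ (M *ᵥ x k) + u k ⬝ᵥ (R *ᵥ u k))
        ≥ x 0 ⬝ᵥ (P *ᵥ x 0) - x N ⬝ᵥ (P *ᵥ x N))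
    ∧ (Tendsto x atTop (nhds 0) →
        (∀ ε > 0, ∃ N₀, ∀ N ≥ N₀,
          ∑ k ∈ Finset.range N, (x k ⬝ᵥ (M *ᵥ x k) + u k ⬝ᵥ (R *ᵥ u k))
            ≥ x 0 ⬝ᵥ (P *ᵥ x 0) - ε)
        ∧ ENNReal.ofReal (x 0 ⬝ᵥ (P *ᵥ x 0))
            ≤ ∑' k, ENNReal.ofReal (x k ⬝ᵥ (M *ᵥ x k) + u k ⬝ᵥ (R *ᵥ u k))) := by
  have stage : ∀ k, x k ⬝ᵥ (P *ᵥ x k) - x (k+1) ⬝ᵥ (P *ᵥ (x (k+1)))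
      ≤ x k ⬝ᵥ (M *ᵥ x k) + u k ⬝ᵥ (R *ᵥ u k) := by
    intro k
    rw [hdyn k]
    exact dare_stage A B P M R hR hP hDARE (x k) (u k)
  have part1 : ∀ N, ∑ k ∈ Finset.range N, (x k ⬝ᵥ (M *ᵥ x k) + u k ⬝ᵥ (R *ᵥ u k))
      ≥ x 0 ⬝ᵥ (P *ᵥ x 0) - x N ⬝ᵥ (P *ᵥ x N) := by
    intro N
    induction N with
    | zero => simp
    | succ N ih =>
      rw [Finset.sum_range_succ]
      have := stage N
      linarith
  refine ⟨part1, fun htend => ?_⟩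
  have hqcont : Continuous fun v : Fin n → ℝ => v ⬝ᵥ (P *ᵥ v) := by
    simp only [dotProduct, mulVec]
    fun_prop
  have hq : Tendsto (fun N => x N ⬝ᵥ (P *ᵥ x N)) atTop (nhds 0) := by
    have := (hqcont.tendsto 0).comp htend
    simpa [Function.comp_def] using this
  have part2a : ∀ ε > (0:ℝ), ∃ N₀, ∀ N ≥ N₀,
      ∑ k ∈ Finset.range N, (x k ⬝ᵥ (M *ᵥ x k) + u k ⬝ᵥ (R *ᵥ u k))
        ≥ x 0 ⬝ᵥ (P *ᵥ x 0) - ε := by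
    intro ε hε
    have hev : ∀ᶠ N in atTop, x N ⬝ᵥ (P *ᵥ x N) < ε := hq.eventually (gt_mem_nhds hε)
    obtain ⟨N₀, hN₀⟩ := eventually_atTop.mp hev
    refine ⟨N₀, fun N hN => ?_⟩
    have h1 := part1 N
    have h2 := hN₀ N hN
    linarith
  refine ⟨part2a, ?_⟩
  have hnonneg : ∀ k, 0 ≤ x k ⬝ᵥ (M *ᵥ x k) + u k ⬝ᵥ (R *ᵥ u k) := by
    intro k
    have h1 : 0 ≤ x k ⬝ᵥ (M *ᵥ x k) := by simpa using hM.dotProduct_mulVec_nonneg (x k)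
    have h2 : 0 ≤ u k ⬝ᵥ (R *ᵥ u k) := by simpa using hR.posSemidef.dotProduct_mulVec_nonneg (u k)
    linarith
  apply ENNReal.le_of_forall_pos_le_add
  intro δ hδ _
  obtain ⟨N₀, hN₀⟩ := part2a δ (by exact_mod_cast hδ)
  have hsum := hN₀ N₀ le_rfl
  calc ENNReal.ofReal (x 0 ⬝ᵥ (P *ᵥ x 0))
      ≤ ENNReal.ofReal ((∑ k ∈ Finset.range N₀, (x k ⬝ᵥ (M *ᵥ x k) + u k ⬝ᵥ (R *ᵥ u k))) + δ) :=
        ENNReal.ofReal_le_ofReal (by linarith)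
    _ ≤ ENNReal.ofReal (∑ k ∈ Finset.range N₀, (x k ⬝ᵥ (M *ᵥ x k) + u k ⬝ᵥ (R *ᵥ u k)))
          + ENNReal.ofReal δ := ENNReal.ofReal_add_le
    _ = (∑ k ∈ Finset.range N₀, ENNReal.ofReal (x k ⬝ᵥ (M *ᵥ x k) + u k ⬝ᵥ (R *ᵥ u k)))
          + ENNReal.ofReal δ := by
        rw [ENNReal.ofReal_sum_of_nonneg (fun i _ => hnonneg i)]
    _ ≤ (∑' k, ENNReal.ofReal (x k ⬝ᵥ (M *ᵥ x k) + u k ⬝ᵥ (R *ᵥ u k))) + ↑δ := by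
        gcongr
        · exact ENNReal.sum_le_tsum _
        · rw [ENNReal.ofReal_coe_nnreal]
end

section
/- Under the hypotheses of the gradient-dominated linear-convergence setting — E a finite-dimensional real inner product space, J : E → ℝ differentiable with L-Lipschitz gradient (L > 0), J(θ) ≥ J* for all θ, and μ (J(θ) − J*) ≤ ‖∇J(θ)‖² for all θ with 0 < μ ≤ 2L — the gradient descent iterates θ_{t+1} = θ_t − (1/L) ∇J(θ_t) satisfy: for every ε > 0 there exists T ∈ ℕ such that for all t ≥ T, J(θ_t) − J* < ε. -/
open Real

lemma descent_lemma
    {E : Type*} [NormedAddCommGroup E] [InnerProductSpace ℝ E] [CompleteSpace E]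
    (J : E → ℝ) (hJ : Differentiable ℝ J)
    (L : ℝ) (hL : 0 < L)
    (hLip : ∀ θ₁ θ₂ : E, ‖gradient J θ₁ - gradient J θ₂‖ ≤ L * ‖θ₁ - θ₂‖)
    (x v : E) :
    J (x + v) ≤ J x + inner ℝ (gradient J x) v + L / 2 * ‖v‖ ^ 2 := by
  set g : ℝ → ℝ := fun t => J (x + t • v) - t * inner ℝ (gradient J x) v - L * t ^ 2 / 2 * ‖v‖ ^ 2 with hg
  have hcurve : ∀ t : ℝ, HasDerivAt (fun s : ℝ => x + s • v) v t := by
    intro t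
    simpa using ((hasDerivAt_id t).smul_const v).const_add x
  have hderivJ : ∀ t : ℝ, HasDerivAt (fun s : ℝ => J (x + s • v))
      (inner ℝ (gradient J (x + t • v)) v) t := by
    intro t
    have h1 : HasGradientAt J (gradient J (x + t • v)) (x + t • v) :=
      (hJ (x + t • v)).hasGradientAt
    have h2 : HasFDerivAt J ((InnerProductSpace.toDual ℝ E) (gradient J (x + t • v))) (x + t • v) :=
      hasGradientAt_iff_hasFDerivAt.mp h1
    exact h2.comp_hasDerivAt t (hcurve t)
  have hgderiv : ∀ t : ℝ, HasDerivAt g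
      (inner ℝ (gradient J (x + t • v)) v - inner ℝ (gradient J x) v - L * t * ‖v‖ ^ 2) t := by
    intro t
    have h3 : HasDerivAt (fun s : ℝ => s * inner ℝ (gradient J x) v)
        (inner ℝ (gradient J x) v) t := by
      simpa using (hasDerivAt_id t).mul_const (inner ℝ (gradient J x) v : ℝ)
    have h4 : HasDerivAt (fun s : ℝ => L * s ^ 2 / 2 * ‖v‖ ^ 2) (L * t * ‖v‖ ^ 2) t := by
      have : HasDerivAt (fun s : ℝ => s ^ 2) (2 * t) t := by
        simpa using hasDerivAt_pow 2 t
      have := ((this.const_mul L).div_const 2).mul_const (‖v‖ ^ 2)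
      rw [show L * t * ‖v‖ ^ 2 = L * (2 * t) / 2 * ‖v‖ ^ 2 by ring]
      exact this
    exact ((hderivJ t).sub h3).sub h4
  have hmono : AntitoneOn g (Set.Icc 0 1) := by
    apply antitoneOn_of_deriv_nonpos (convex_Icc 0 1)
    · exact fun t _ => ((hgderiv t).continuousAt).continuousWithinAt
    · exact fun t _ => ((hgderiv t).differentiableAt).differentiableWithinAt
    · intro t ht
      rw [interior_Icc] at ht
      rw [(hgderiv t).deriv]
      have key : inner ℝ (gradient J (x + t • v)) v - inner ℝ (gradient J x) v ≤ L * t * ‖v‖ ^ 2 := by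
        have h5 : (inner ℝ (gradient J (x + t • v)) v : ℝ) - inner ℝ (gradient J x) v
            = inner ℝ (gradient J (x + t • v) - gradient J x) v := by
          rw [inner_sub_left]
        rw [h5]
        calc (inner ℝ (gradient J (x + t • v) - gradient J x) v : ℝ)
            ≤ ‖gradient J (x + t • v) - gradient J x‖ * ‖v‖ := real_inner_le_norm _ _
          _ ≤ (L * ‖(x + t • v) - x‖) * ‖v‖ := by
              gcongr; exact hLip _ _
          _ = L * t * ‖v‖ ^ 2 := by
              simp [norm_smul, abs_of_pos ht.1]
              ring
      linarith
  have := hmono (Set.left_mem_Icc.mpr zero_le_one) (Set.right_mem_Icc.mpr zero_le_one) zero_le_one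
  simp only [hg] at this
  simp at this
  have hfg : (fderiv ℝ J x) v = inner ℝ (gradient J x) v := by simp [gradient]
  linarith
theorem gradient_dominated_eventually_eps_optimal
    {E : Type*} [NormedAddCommGroup E] [InnerProductSpace ℝ E]
    [FiniteDimensional ℝ E]
    (J : E → ℝ) (hJ : Differentiable ℝ J)
    (L : ℝ) (hL : 0 < L)
    (hLip : ∀ θ₁ θ₂ : E, ‖gradient J θ₁ - gradient J θ₂‖ ≤ L * ‖θ₁ - θ₂‖)
    (Jstar : ℝ) (hlb : ∀ θ : E, Jstar ≤ J θ)
    (μ : ℝ) (hμ0 : 0 < μ) (hμ2L : μ ≤ 2 * L)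
    (hPL : ∀ θ : E, μ * (J θ - Jstar) ≤ ‖gradient J θ‖ ^ 2)
    (θ : ℕ → E)
    (hiter : ∀ t, θ (t + 1) = θ t - (1 / L) • gradient J (θ t)) :
    ∀ ε > (0 : ℝ), ∃ T : ℕ, ∀ t ≥ T, J (θ t) - Jstar < ε := by
  intro ε hε
  set r : ℝ := 1 - μ / (2 * L) with hr
  have h2L : (0:ℝ) < 2 * L := by linarith
  have hr0 : 0 ≤ r := by
    rw [hr, sub_nonneg, div_le_one h2L]; linarith
  have hr1 : r < 1 := by
    rw [hr]; have := div_pos hμ0 h2L; linarith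
  -- one-step contraction
  have hstep : ∀ t, J (θ (t + 1)) - Jstar ≤ r * (J (θ t) - Jstar) := by
    intro t
    have hdesc := descent_lemma J hJ L hL hLip (θ t) (-(1 / L) • gradient J (θ t))
    have heq : θ (t + 1) = θ t + -(1 / L) • gradient J (θ t) := by
      rw [hiter t]; module
    rw [← heq] at hdesc
    have hin : (inner ℝ (gradient J (θ t)) (-(1 / L) • gradient J (θ t)) : ℝ)
        = -(1 / L) * ‖gradient J (θ t)‖ ^ 2 := by
      rw [real_inner_smul_right, real_inner_self_eq_norm_sq]
    have hnv : ‖-(1 / L) • gradient J (θ t)‖ ^ 2 = (1 / L) ^ 2 * ‖gradient J (θ t)‖ ^ 2 := by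
      have h1 : ‖(-(1 / L) : ℝ)‖ = 1 / L := by
        rw [norm_neg, Real.norm_eq_abs, abs_of_pos (by positivity)]
      rw [norm_smul, mul_pow, h1]
    rw [hin, hnv] at hdesc
    have hkey : J (θ (t + 1)) ≤ J (θ t) - 1 / (2 * L) * ‖gradient J (θ t)‖ ^ 2 := by
      have : -(1 / L) * ‖gradient J (θ t)‖ ^ 2 + L / 2 * ((1 / L) ^ 2 * ‖gradient J (θ t)‖ ^ 2)
          = -(1 / (2 * L)) * ‖gradient J (θ t)‖ ^ 2 := by
        field_simp; ring
      linarith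
    have hPLt := hPL (θ t)
    calc J (θ (t + 1)) - Jstar ≤ J (θ t) - Jstar - 1 / (2 * L) * ‖gradient J (θ t)‖ ^ 2 := by
          linarith
      _ ≤ J (θ t) - Jstar - 1 / (2 * L) * (μ * (J (θ t) - Jstar)) := by
          have := mul_le_mul_of_nonneg_left hPLt (by positivity : (0:ℝ) ≤ 1 / (2 * L))
          linarith
      _ = r * (J (θ t) - Jstar) := by rw [hr]; field_simp
  -- geometric bound
  have hgeo : ∀ t, J (θ t) - Jstar ≤ r ^ t * (J (θ 0) - Jstar) := by
    intro t
    induction t with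
    | zero => simp
    | succ n ih =>
      calc J (θ (n + 1)) - Jstar ≤ r * (J (θ n) - Jstar) := hstep n
        _ ≤ r * (r ^ n * (J (θ 0) - Jstar)) := by gcongr
        _ = r ^ (n + 1) * (J (θ 0) - Jstar) := by ring
  have htend : Filter.Tendsto (fun t : ℕ => r ^ t * (J (θ 0) - Jstar)) Filter.atTop (nhds 0) := by
    have := tendsto_pow_atTop_nhds_zero_of_lt_one hr0 hr1
    simpa using this.mul_const (J (θ 0) - Jstar)
  have := htend.eventually (gt_mem_nhds hε)
  rw [Filter.eventually_atTop] at this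
  obtain ⟨T, hT⟩ := this
  exact ⟨T, fun t ht => lt_of_le_of_lt (hgeo t) (hT t ht)⟩
end
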